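/- Let G and H be non-trivial groups, let H act faithfully on a set X, let y ∈ X and t ∈ H be such that the ⟨t⟩-orbit y⟨t⟩ is infinite, let S_H be a subset of H that invariably generates H, and let 𝒢 be a generating set of the coordinate subgroup G_y. For each s ∈ S_H ∪ 𝒢·t ∪ {t} choose an arbitrary conjugator a_s ∈ G ≀_X H and write S' := {a_s⁻¹·s·a_s : s ∈ S} for S ⊆ G ≀_X H. Then there exists c ∈ ℕ such that the subgroup of G ≀_X H generated by S_H' ∪ (𝒢·t)' ∪ {t}' contains a Γ_{y·t^c}-set. -/

import Mathlib

open Function SemidirectProduct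

/-- A subset `S` invariably generates `K` if replacing each element of `S` by an
arbitrary conjugate always yields a generating set of `K`. -/
def InvariablyGenerates (K : Type*) [Group K] (S : Set K) : Prop :=
  ∀ a : K → K, Subgroup.closure ((fun s => (a s)⁻¹ * s * a s) '' S) = ⊤

/-- `K` is invariably generated if `K` invariably generates itself. -/
def IsIG (K : Type*) [Group K] : Prop :=
  InvariablyGenerates K Set.univ

/-- `K` is finitely invariably generated if some finite subset invariably generates it. -/
def IsFIG (K : Type*) [Group K] : Prop :=
  ∃ S : Set K, S.Finite ∧ InvariablyGenerates K S

/-- The base of the wreath product `G ≀_X H`: the restricted direct product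
`⨁_{x ∈ X} G`, realized as the finitely supported functions `X → G`. -/
def WreathBase (G X : Type*) [Group G] : Subgroup (X → G) where
  carrier := {f | (mulSupport f).Finite}
  one_mem' := by simp
  mul_mem' {f g} hf hg := (Set.Finite.union hf hg).subset (mulSupport_mul f g)
  inv_mem' {f} hf := by simpa using hf

lemma mem_wreathBase {G X : Type*} [Group G] {f : X → G} :
    f ∈ WreathBase G X ↔ (mulSupport f).Finite := Iff.rfl

/-- The permutation action of `H` on the base, `(h • f) x = f (h⁻¹ • x)`, so that in the
wreath product conjugation by `h` (i.e. `h · g^{(x)} · h⁻¹`) sends the coordinate subgroup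
`G_x` to `G_{h • x}`; equivalently `h⁻¹ · g^{(x)} · h = g^{(h⁻¹ • x)}`, which is the
left-action rendering of "conjugation multiplies indices on the right". -/
def wreathAut (G H X : Type*) [Group G] [Group H] [MulAction H X] :
    H →* MulAut (WreathBase G X) where
  toFun h :=
    { toFun := fun f => ⟨fun x => (f : X → G) (h⁻¹ • x),
        mem_wreathBase.mpr (((mem_wreathBase.mp f.2).image (h • ·)).subset
          fun x hx => ⟨h⁻¹ • x, hx, by simp⟩)⟩
      invFun := fun f => ⟨fun x => (f : X → G) (h • x),
        mem_wreathBase.mpr (((mem_wreathBase.mp f.2).image (h⁻¹ • ·)).subset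
          fun x hx => ⟨h • x, hx, by simp⟩)⟩
      left_inv := fun f => Subtype.ext (funext fun x => by simp)
      right_inv := fun f => Subtype.ext (funext fun x => by simp)
      map_mul' := fun f g => Subtype.ext (funext fun x => by simp) }
  map_one' := by
    ext f x
    simp
  map_mul' h₁ h₂ := by
    ext f x
    simp [mul_smul]

/-- The restricted wreath product `G ≀_X H`. -/
abbrev WreathProduct (G H X : Type*) [Group G] [Group H] [MulAction H X] :=
  WreathBase G X ⋊[wreathAut G H X] H

open scoped Classical in
/-- `g^{(y)}`: the element of the base which is `g` in coordinate `y` and trivial elsewhere. -/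
noncomputable def WreathBase.single {G : Type*} (X : Type*) [Group G] (y : X) :
    G →* WreathBase G X where
  toFun g := ⟨fun x => if x = y then g else 1,
    mem_wreathBase.mpr ((Set.finite_singleton y).subset fun x hx => by
      by_contra hxy
      exact hx (if_neg hxy))⟩
  map_one' := Subtype.ext (funext fun x => by simp)
  map_mul' g₁ g₂ := Subtype.ext (funext fun x => by by_cases h : x = y <;> simp [h])

/-- The embedding of `G` onto the coordinate subgroup `G_y` of the wreath product. -/
noncomputable def coordHom (G H : Type*) {X : Type*} [Group G] [Group H] [MulAction H X]
    (y : X) : G →* WreathProduct G H X :=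
  SemidirectProduct.inl.comp (WreathBase.single X y)

/-- `H_X` is of torsion-type if there is `y ∈ X` such that for every `x` in the `H`-orbit
of `y` and every `k ∈ H`, the `⟨k⟩`-orbit of `x` is finite. -/
def IsTorsionType (H X : Type*) [Group H] [MulAction H X] : Prop :=
  ∃ y : X, ∀ x ∈ MulAction.orbit H y, ∀ k : H, (Set.range fun n : ℤ => k ^ n • x).Finite

/-- A `Γ_z`-set: a set of base elements containing, for every `g ∈ G`, an element whose
coordinate at `z` is `g`. -/
def IsGammaSet {G X : Type*} [Group G] (z : X) (Γ : Set (WreathBase G X)) : Prop :=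
  ∀ g : G, ∃ f ∈ Γ, (f : X → G) z = g

/-!
Since `S_H` invariably generates `H`, the subgroup `L` generated by the conjugated elements maps
onto `H`, so every conjugator can be corrected by an element of `L` to one lying in the base.
Writing `x^a = a⁻¹ x a`, `L` thus contains `t^E` and, for each `g ∈ 𝒢`, `(g^{(y)} t)^F` with
`E`, `F` in the base. For every `n ∈ ℤ` the element `((g^{(y)} t)^F)^n ((t^E)^n)⁻¹` of `L` lies
in the base. At `z = (t ^ c)⁻¹ • y`, where `c > 0` is chosen with `E z = 1`, and for `|n|`
large enough to leave the supports of `E` and `F`, its coordinate is `(F z)⁻¹` if `n ≥ 0` and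
`(F z)⁻¹ g⁻¹` if `n ≤ -c`. Hence the `z`-coordinates of the base elements of `L`, a subgroup
of `G`, contain `𝒢`.
-/
namespace SemidirectProduct

variable {N K : Type*} [Group N] [Group K] {φ : K →* MulAut N}

lemma map_rightHom_eq_top_of_invariablyGenerates {S : Set K} (hS : InvariablyGenerates K S)
    {L : Subgroup (N ⋊[φ] K)} (a : K → N ⋊[φ] K) (hL : ∀ s ∈ S, (a s)⁻¹ * inr s * a s ∈ L) :
    L.map rightHom = ⊤ := by
  rw [eq_top_iff, ← hS (fun s => rightHom (a s)), Subgroup.closure_le]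
  rintro _ ⟨s, hs, rfl⟩
  exact ⟨_, hL s hs, by simp⟩

lemma exists_inl_conj_mem {L : Subgroup (N ⋊[φ] K)} (hL : L.map rightHom = ⊤)
    {a x : N ⋊[φ] K} (hx : a⁻¹ * x * a ∈ L) : ∃ f : N, (inl f)⁻¹ * x * inl f ∈ L := by
  obtain ⟨ρ, hρ, hρa⟩ : (rightHom a)⁻¹ ∈ L.map rightHom := hL ▸ Subgroup.mem_top _
  have hbase : inl (a * ρ).left = a * ρ := by
    conv_rhs => rw [← inl_left_mul_inr_right (a * ρ)]
    rw [rightHom_eq_right] at hρa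
    simp [hρa]
  refine ⟨(a * ρ).left, ?_⟩
  rw [hbase, show (a * ρ)⁻¹ * x * (a * ρ) = ρ⁻¹ * (a⁻¹ * x * a) * ρ by group]
  exact mul_mem (mul_mem (inv_mem hρ) hx) hρ

lemma conj_mul_conj_inv_eq_inl (F E P : N) (k : K) :
    (inl F)⁻¹ * (inl P * inr k) * inl F * ((inl E)⁻¹ * inr k * inl E)⁻¹
      = (inl (F⁻¹ * P * φ k (F * E⁻¹) * E) : N ⋊[φ] K) := by
  ext <;> simp [mul_assoc]

lemma zpow_right (x : N ⋊[φ] K) (n : ℤ) : (x ^ n).right = x.right ^ n := by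
  rw [← rightHom_eq_right, map_zpow, rightHom_eq_right]

end SemidirectProduct

lemma injective_zpow_smul_of_infinite {H X : Type*} [Group H] [MulAction H X] {t : H} {y : X}
    (ht : (Set.range fun n : ℤ => t ^ n • y).Infinite) : Injective fun n : ℤ => t ^ n • y := by
  have hp : minimalPeriod (t • ·) y = 0 := by
    by_contra hp
    refine ht (((Set.finite_Ico 0 (minimalPeriod (t • ·) y : ℤ)).image
      fun n => t ^ n • y).subset ?_)
    rintro _ ⟨n, rfl⟩
    exact ⟨_, ⟨Int.emod_nonneg _ (by omega), Int.emod_lt_of_pos _ (by omega)⟩,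
      MulAction.zpow_smul_mod_minimalPeriod t y n⟩
  intro a b hab
  have : t ^ (a - b) • y = y := by
    rw [sub_eq_neg_add, zpow_add, mul_smul, show t ^ a • y = t ^ b • y from hab, ← mul_smul,
      ← zpow_add, neg_add_cancel, zpow_zero, one_smul]
  rw [MulAction.zpow_smul_eq_iff_minimalPeriod_dvd, hp, Nat.cast_zero, zero_dvd_iff] at this
  omega

namespace WreathBase

variable {G X : Type*} [Group G]

open scoped Classical in
lemma single_apply (y : X) (g : G) (x : X) :
    ((single X y g : WreathBase G X) : X → G) x = if x = y then g else 1 := rfl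

def eval (z : X) : WreathBase G X →* G :=
  (Pi.evalMonoidHom (fun _ => G) z).comp (WreathBase G X).subtype

lemma eval_apply (z : X) (f : WreathBase G X) : eval z f = (f : X → G) z := rfl

lemma eventually_apply_eq_one {α : Type*} (f : WreathBase G X) {u : α → X} (hu : Injective u) :
    ∀ᶠ a in Filter.cofinite, (f : X → G) (u a) = 1 :=
  hu.tendsto_cofinite.eventually
    ((mem_wreathBase.mp f.2).eventually_cofinite_notMem.mono fun _ => notMem_mulSupport.mp)

end WreathBase

section

variable {G H X : Type*} [Group G] [Group H] [MulAction H X]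

lemma wreathAut_apply (h : H) (f : WreathBase G X) (x : X) :
    ((wreathAut G H X h f : WreathBase G X) : X → G) x = (f : X → G) (h⁻¹ • x) := rfl

lemma single_mul_inr_zpow_left_apply {y x : X} {t : H} {c : ℤ} (hc : 0 < c)
    (hx : ∀ j : ℤ, t ^ j • x = y ↔ j = c) (g : G) (n : ℤ) :
    ((((inl (WreathBase.single X y g) * inr t : WreathProduct G H X) ^ n).left :
      WreathBase G X) : X → G) x = if n ≤ -c then g⁻¹ else 1 := by
  set P : ℤ → G := fun n =>
    ((((inl (WreathBase.single X y g) * inr t : WreathProduct G H X) ^ n).left :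
      WreathBase G X) : X → G) x
  have step : ∀ n, P (n + 1) = P n * if n = -c then g else 1 := by
    intro n
    have hxn : (t ^ n)⁻¹ • x = y ↔ n = -c := by
      rw [← zpow_neg, hx]; omega
    simp only [P, zpow_add_one, mul_left, SemidirectProduct.zpow_right, mul_right, right_inl,
      right_inr, one_mul, left_inl, left_inr, map_one, Subgroup.coe_mul, Pi.mul_apply,
      wreathAut_apply, mul_one, WreathBase.single_apply]
    simp only [hxn]
  show P n = _
  induction n using Int.induction_on with
  | zero => simp [P]; omega
  | succ i ih => rw [step, ih]; split_ifs <;> first | omega | simp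
  | pred i ih =>
    have h := step (-i - 1)
    rw [sub_add_cancel, ih] at h
    rw [eq_mul_inv_of_mul_eq h.symm]
    split_ifs <;> first | omega | simp

lemma inl_conj_zpow_mul_conj_zpow_inv_mem {L : Subgroup (WreathProduct G H X)} {t : H}
    {E F s : WreathBase G X} (hEL : (inl E)⁻¹ * inr t * inl E ∈ L)
    (hFL : (inl F)⁻¹ * (inl s * inr t) * inl F ∈ L) (n : ℤ) :
    inl (F⁻¹ * ((inl s * inr t : WreathProduct G H X) ^ n).left *
      wreathAut G H X (t ^ n) (F * E⁻¹) * E) ∈ L := by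
  have hconj : ∀ a b : WreathProduct G H X, (a⁻¹ * b * a) ^ n = a⁻¹ * b ^ n * a := fun a b => by
    simpa using conj_zpow (a := a⁻¹) (b := b) (i := n)
  have hpow : (inl s * inr t : WreathProduct G H X) ^ n
      = inl ((inl s * inr t : WreathProduct G H X) ^ n).left * inr (t ^ n) := by
    conv_lhs => rw [← inl_left_mul_inr_right ((inl s * inr t) ^ n)]
    simp [SemidirectProduct.zpow_right]
  rw [← SemidirectProduct.conj_mul_conj_inv_eq_inl, ← hpow, map_zpow inr t n, ← hconj,
    ← hconj]
  exact mul_mem (zpow_mem hFL n) (inv_mem (zpow_mem hEL n))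

lemma mem_map_eval_of_conj_mem {L : Subgroup (WreathProduct G H X)} {t : H} {y : X}
    (ht : Injective fun n : ℤ => t ^ n • y) {c : ℕ} (hc : 0 < c) {E F : WreathBase G X}
    (hE : (E : X → G) ((t ^ c)⁻¹ • y) = 1) (hEL : (inl E)⁻¹ * inr t * inl E ∈ L) {g : G}
    (hFL : (inl F)⁻¹ * (coordHom G H y g * inr t) * inl F ∈ L) :
    g ∈ (L.comap inl).map (WreathBase.eval ((t ^ c)⁻¹ • y)) := by
  set z := (t ^ c)⁻¹ • y with hzdef
  have hz : ∀ j : ℤ, t ^ j • z = t ^ (j - c) • y := fun j => by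
    rw [hzdef, ← zpow_natCast, ← zpow_neg, smul_smul, ← zpow_add, sub_eq_add_neg]
  have hzy : ∀ j : ℤ, t ^ j • z = y ↔ j = c := fun j => by
    rw [hz, ← ht.eq_iff.trans (show j - c = 0 ↔ j = c by omega), zpow_zero, one_smul]
  have hzinj : Injective fun n : ℤ => (t ^ n)⁻¹ • z := fun a b hab => by
    simp only [← zpow_neg, hz] at hab
    have := ht hab
    omega
  have hvalue : ∀ n : ℤ, (F : X → G) ((t ^ n)⁻¹ • z) = 1 → (E : X → G) ((t ^ n)⁻¹ • z) = 1 →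
      ((F : X → G) z)⁻¹ * (if n ≤ -(c : ℤ) then g⁻¹ else 1) ∈
        (L.comap inl).map (WreathBase.eval z) := by
    intro n hFn hEn
    refine ⟨_, inl_conj_zpow_mul_conj_zpow_inv_mem hEL hFL n, ?_⟩
    simp only [WreathBase.eval_apply, Subgroup.coe_mul, Pi.mul_apply, InvMemClass.coe_inv,
      Pi.inv_apply, wreathAut_apply, hFn, hEn, hE, single_mul_inr_zpow_left_apply (by omega) hzy]
    group
  have hev := ((WreathBase.eventually_apply_eq_one F hzinj).and
    (WreathBase.eventually_apply_eq_one E hzinj))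
  rw [Int.cofinite_eq, Filter.eventually_sup] at hev
  obtain ⟨n, ⟨hFn, hEn⟩, hn⟩ := (hev.2.and (Filter.eventually_ge_atTop 0)).exists
  obtain ⟨m, ⟨hFm, hEm⟩, hm⟩ := (hev.1.and (Filter.eventually_le_atBot (-(c : ℤ)))).exists
  have h1 := hvalue n hFn hEn
  have h2 := hvalue m hFm hEm
  rw [if_neg (by omega), mul_one] at h1
  rw [if_pos hm] at h2
  simpa using mul_mem (inv_mem h2) h1

end

theorem exists_isGammaSet_preimage_inl {G H X : Type*} [Group G] [Group H] [MulAction H X]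
    {L : Subgroup (WreathProduct G H X)} (hL : L.map rightHom = ⊤) {y : X} {t : H}
    (ht : Injective fun n : ℤ => t ^ n • y) {aT : WreathProduct G H X}
    (hT : aT⁻¹ * inr t * aT ∈ L) {𝒢 : Set G} (h𝒢 : Subgroup.closure 𝒢 = ⊤)
    (aGt : G → WreathProduct G H X)
    (hGt : ∀ g ∈ 𝒢, (aGt g)⁻¹ * (coordHom G H y g * inr t) * aGt g ∈ L) :
    ∃ c : ℕ, IsGammaSet ((t ^ c)⁻¹ • y) (inl ⁻¹' (L : Set (WreathProduct G H X))) := by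
  obtain ⟨E, hEL⟩ := SemidirectProduct.exists_inl_conj_mem hL hT
  have hinj : Injective fun c : ℕ => (t ^ c)⁻¹ • y := fun a b hab => by
    simp only [← zpow_natCast, ← zpow_neg] at hab
    exact_mod_cast neg_injective (ht hab)
  obtain ⟨c, hE, hc⟩ := ((WreathBase.eventually_apply_eq_one E hinj).and
    (Filter.eventually_cofinite_ne 0)).exists
  have htop : (L.comap inl).map (WreathBase.eval ((t ^ c)⁻¹ • y)) = ⊤ := by
    rw [eq_top_iff, ← h𝒢, Subgroup.closure_le]
    intro g hg
    obtain ⟨F, hFL⟩ := SemidirectProduct.exists_inl_conj_mem hL (hGt g hg)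
    exact mem_map_eval_of_conj_mem ht (Nat.pos_of_ne_zero hc) hE hEL hFL
  refine ⟨c, fun g => ?_⟩
  obtain ⟨f, hf, rfl⟩ := htop ▸ Subgroup.mem_top g
  exact ⟨f, hf, rfl⟩

theorem stmt_19_general (G H X : Type*) [Group G] [Group H]
    [MulAction H X]
    (y : X) (t : H) (ht : (Set.range fun n : ℤ => t ^ n • y).Infinite)
    (S_H : Set H) (hS : InvariablyGenerates H S_H)
    (𝒢 : Set G) (h𝒢 : Subgroup.closure 𝒢 = ⊤)
    (aS : H → WreathProduct G H X) (aGt : G → WreathProduct G H X)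
    (aT : WreathProduct G H X) :
    ∃ (c : ℕ) (Γ : Set (WreathBase G X)),
      IsGammaSet ((t ^ c)⁻¹ • y) Γ ∧
        (fun f => (inl f : WreathProduct G H X)) '' Γ ⊆
          ((Subgroup.closure
            (((fun s => (aS s)⁻¹ * inr s * aS s) '' S_H) ∪
              ((fun g => (aGt g)⁻¹ * (coordHom G H y g * inr t) * aGt g) '' 𝒢) ∪
              {aT⁻¹ * inr t * aT}) : Subgroup (WreathProduct G H X)) :
            Set (WreathProduct G H X)) := by
  set L : Subgroup (WreathProduct G H X) := Subgroup.closure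
    (((fun s => (aS s)⁻¹ * inr s * aS s) '' S_H) ∪
      ((fun g => (aGt g)⁻¹ * (coordHom G H y g * inr t) * aGt g) '' 𝒢) ∪ {aT⁻¹ * inr t * aT})
  have hL : L.map rightHom = ⊤ :=
    SemidirectProduct.map_rightHom_eq_top_of_invariablyGenerates hS aS fun s hs =>
      Subgroup.subset_closure (Or.inl (Or.inl ⟨s, hs, rfl⟩))
  obtain ⟨c, hc⟩ := exists_isGammaSet_preimage_inl hL (injective_zpow_smul_of_infinite ht)
    (Subgroup.subset_closure (Or.inr rfl)) h𝒢 aGt fun g hg =>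
      Subgroup.subset_closure (Or.inl (Or.inr ⟨g, hg, rfl⟩))
  exact ⟨c, _, hc, Set.image_preimage_subset _ _⟩

theorem stmt_19 (G H X : Type*) [Group G] [Group H] [Nontrivial G] [Nontrivial H]
    [MulAction H X] [FaithfulSMul H X]
    (y : X) (t : H) (ht : (Set.range fun n : ℤ => t ^ n • y).Infinite)
    (S_H : Set H) (hS : InvariablyGenerates H S_H)
    (𝒢 : Set G) (h𝒢 : Subgroup.closure 𝒢 = ⊤)
    (aS : H → WreathProduct G H X) (aGt : G → WreathProduct G H X)
    (aT : WreathProduct G H X) :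
    ∃ (c : ℕ) (Γ : Set (WreathBase G X)),
      IsGammaSet ((t ^ c)⁻¹ • y) Γ ∧
        (fun f => (inl f : WreathProduct G H X)) '' Γ ⊆
          ((Subgroup.closure
            (((fun s => (aS s)⁻¹ * inr s * aS s) '' S_H) ∪
              ((fun g => (aGt g)⁻¹ * (coordHom G H y g * inr t) * aGt g) '' 𝒢) ∪
              {aT⁻¹ * inr t * aT}) : Subgroup (WreathProduct G H X)) :
            Set (WreathProduct G H X)) :=
  stmt_19_general G H X y t ht S_H hS 𝒢 h𝒢 aS aGt aT
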